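/- arXiv:1204.5334 — 2 statements merged into one kernel-verified Lean document; each statement's English description precedes it below -/
import Mathlib

section
/- Let Ω be a finite probability space and h₁, h₂ : Ω → {−1, 0, 1} random variables. Let s = sign(h₁ + h₂) and V(X) = P(X = 1) − P(X = −1). Then V(s) − (V(h₁)+V(h₂))/2 = (1/2)·[ P(h₁ = 0 ∧ h₂ = 1) − P(h₁ = 0 ∧ h₂ = −1) + P(h₂ = 0 ∧ h₁ = 1) − P(h₂ = 0 ∧ h₁ = −1) ]. -/
open scoped Classical

/-- Probability of an event on a finite probability space given by weights `p`. -/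
noncomputable def Pr {Ω : Type*} [Fintype Ω] (p : Ω → ℝ) (E : Ω → Prop) : ℝ :=
  ∑ ω, if E ω then p ω else 0

/-- Expected payoff of a `{-1,0,1}`-valued random variable under payoffs (+1,0,-1). -/
noncomputable def V {Ω : Type*} [Fintype Ω] (p : Ω → ℝ) (X : Ω → ℤ) : ℝ :=
  Pr p (fun ω => X ω = 1) - Pr p (fun ω => X ω = -1)

/-! For `{-1,0,1}`-valued `h₁, h₂` and `s = sign (h₁ + h₂)` one has pointwise
`s - (h₁ + h₂) / 2 = ([h₁ = 0] h₂ + [h₂ = 0] h₁) / 2`: if both are nonzero, `s` is their common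
value or `0` according as they agree or cancel. Since `V` of a `{-1,0,1}`-valued variable is its
expectation, taking expectations gives the identity. -/

theorem Int.two_mul_sign_add {a b : ℤ} (ha : a = -1 ∨ a = 0 ∨ a = 1)
    (hb : b = -1 ∨ b = 0 ∨ b = 1) :
    2 * (a + b).sign = a + b + (if a = 0 then b else 0) + (if b = 0 then a else 0) := by
  rcases ha with rfl | rfl | rfl <;> rcases hb with rfl | rfl | rfl <;> decide

section Expectation

variable {Ω : Type*} [Fintype Ω] (p : Ω → ℝ)

theorem Pr_and_eq_one_sub_Pr_and_eq_neg_one (E : Ω → Prop) [DecidablePred E] {X : Ω → ℤ}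
    (hX : ∀ ω, X ω = -1 ∨ X ω = 0 ∨ X ω = 1) :
    Pr p (fun ω => E ω ∧ X ω = 1) - Pr p (fun ω => E ω ∧ X ω = -1) =
      ∑ ω, p ω * (if E ω then X ω else 0 : ℤ) := by
  rw [Pr, Pr, ← Finset.sum_sub_distrib]
  refine Finset.sum_congr rfl fun ω _ => ?_
  by_cases hE : E ω <;> rcases hX ω with h | h | h <;> simp [hE, h]

theorem V_eq_sum_mul {X : Ω → ℤ} (hX : ∀ ω, X ω = -1 ∨ X ω = 0 ∨ X ω = 1) :
    V p X = ∑ ω, p ω * X ω := by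
  simpa [V] using Pr_and_eq_one_sub_Pr_and_eq_neg_one p (fun _ => True) hX

end Expectation

theorem stmt_14_general {Ω : Type*} [Fintype Ω] (p : Ω → ℝ)
    (h₁ h₂ : Ω → ℤ)
    (hr₁ : ∀ ω, h₁ ω = -1 ∨ h₁ ω = 0 ∨ h₁ ω = 1)
    (hr₂ : ∀ ω, h₂ ω = -1 ∨ h₂ ω = 0 ∨ h₂ ω = 1) :
    V p (fun ω => (h₁ ω + h₂ ω).sign) - (V p h₁ + V p h₂) / 2 =
      (1 / 2) * (Pr p (fun ω => h₁ ω = 0 ∧ h₂ ω = 1) -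
        Pr p (fun ω => h₁ ω = 0 ∧ h₂ ω = -1) +
        Pr p (fun ω => h₂ ω = 0 ∧ h₁ ω = 1) -
        Pr p (fun ω => h₂ ω = 0 ∧ h₁ ω = -1)) := by
  have hsign : ∀ ω, (h₁ ω + h₂ ω).sign = -1 ∨ (h₁ ω + h₂ ω).sign = 0 ∨ (h₁ ω + h₂ ω).sign = 1 :=
    fun ω => by rcases (h₁ ω + h₂ ω).sign_trichotomy with h | h | h <;> simp [h]
  rw [add_sub_assoc,
    Pr_and_eq_one_sub_Pr_and_eq_neg_one p _ hr₂, Pr_and_eq_one_sub_Pr_and_eq_neg_one p _ hr₁,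
    V_eq_sum_mul p hsign, V_eq_sum_mul p hr₁, V_eq_sum_mul p hr₂,
    ← Finset.sum_add_distrib, Finset.sum_div, ← Finset.sum_sub_distrib, ← Finset.sum_add_distrib,
    Finset.mul_sum]
  refine Finset.sum_congr rfl fun ω _ => ?_
  have hpointwise : (2 : ℝ) * (h₁ ω + h₂ ω).sign =
      h₁ ω + h₂ ω + (if h₁ ω = 0 then h₂ ω else 0 : ℤ) + (if h₂ ω = 0 then h₁ ω else 0 : ℤ) := by
    exact_mod_cast Int.two_mul_sign_add (hr₁ ω) (hr₂ ω)
  linear_combination (p ω / 2) * hpointwise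

theorem stmt_14 {Ω : Type*} [Fintype Ω] (p : Ω → ℝ)
    (hp : ∀ ω, 0 ≤ p ω) (hsum : ∑ ω, p ω = 1)
    (h₁ h₂ : Ω → ℤ)
    (hr₁ : ∀ ω, h₁ ω = -1 ∨ h₁ ω = 0 ∨ h₁ ω = 1)
    (hr₂ : ∀ ω, h₂ ω = -1 ∨ h₂ ω = 0 ∨ h₂ ω = 1) :
    V p (fun ω => (h₁ ω + h₂ ω).sign) - (V p h₁ + V p h₂) / 2 =
      (1 / 2) * (Pr p (fun ω => h₁ ω = 0 ∧ h₂ ω = 1) -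
        Pr p (fun ω => h₁ ω = 0 ∧ h₂ ω = -1) +
        Pr p (fun ω => h₂ ω = 0 ∧ h₁ ω = 1) -
        Pr p (fun ω => h₂ ω = 0 ∧ h₁ ω = -1)) :=
  stmt_14_general p h₁ h₂ hr₁ hr₂
end

section
/- Let Ω be a finite probability space and h₁, h₂ : Ω → {−1, 0, 1} random variables such that conditional on {h₁ = 0} (assumed of positive probability), h₂ = 1 is at least as likely as h₂ = −1, and conditional on {h₂ = 0} (assumed of positive probability), h₁ = 1 is at least as likely as h₁ = −1. Then with s = sign(h₁+h₂) and V(X) = P(X=1) − P(X=−1), we have V(s) ≥ (V(h₁)+V(h₂))/2. -/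
open scoped Classical

/-!
For `a, b ∈ {-1, 0, 1}` and the payoff `u(1) = 1`, `u(0) = 0`, `u(-1) = -1`,
`2 u(sign (a + b)) = u a + u b + [a = 0] u b + [b = 0] u a`: the two decision makers either
agree, cancel out, or one of them is neutral. Taking expectations,
`2 V(s) - V(h₁) - V(h₂)` is the sum of the advantages of the good action over the bad one on
`{h₁ = 0}` and on `{h₂ = 0}`, both nonnegative by hypothesis.
-/

noncomputable def payoff (x : ℤ) : ℝ :=
  if x = 1 then 1 else if x = -1 then -1 else 0

theorem two_mul_payoff_sign_add {a b : ℤ} (ha : a = -1 ∨ a = 0 ∨ a = 1)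
    (hb : b = -1 ∨ b = 0 ∨ b = 1) :
    2 * payoff (a + b).sign = payoff a + payoff b
      + (if a = 0 then payoff b else 0) + (if b = 0 then payoff a else 0) := by
  rcases ha with rfl | rfl | rfl <;> rcases hb with rfl | rfl | rfl <;>
    norm_num [payoff, Int.sign_eq_one_of_pos]

section

variable {Ω : Type*} [Fintype Ω] (p : Ω → ℝ)

theorem Pr_and_sub_Pr_and (E : Ω → Prop) (X : Ω → ℤ) :
    Pr p (fun ω => E ω ∧ X ω = 1) - Pr p (fun ω => E ω ∧ X ω = -1)
      = ∑ ω, if E ω then p ω * payoff (X ω) else 0 := by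
  rw [Pr, Pr, ← Finset.sum_sub_distrib]
  refine Finset.sum_congr rfl fun ω _ => ?_
  by_cases hE : E ω <;> by_cases h1 : X ω = 1 <;> by_cases h2 : X ω = -1 <;>
    simp_all [payoff]

theorem V_eq_sum_payoff (X : Ω → ℤ) : V p X = ∑ ω, p ω * payoff (X ω) := by
  simpa [V] using Pr_and_sub_Pr_and p (fun _ => True) X

theorem two_mul_V_sign_add (h₁ h₂ : Ω → ℤ)
    (hr₁ : ∀ ω, h₁ ω = -1 ∨ h₁ ω = 0 ∨ h₁ ω = 1)
    (hr₂ : ∀ ω, h₂ ω = -1 ∨ h₂ ω = 0 ∨ h₂ ω = 1) :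
    2 * V p (fun ω => (h₁ ω + h₂ ω).sign) = V p h₁ + V p h₂
      + (Pr p (fun ω => h₁ ω = 0 ∧ h₂ ω = 1) - Pr p (fun ω => h₁ ω = 0 ∧ h₂ ω = -1))
      + (Pr p (fun ω => h₂ ω = 0 ∧ h₁ ω = 1) - Pr p (fun ω => h₂ ω = 0 ∧ h₁ ω = -1)) := by
  simp only [Pr_and_sub_Pr_and, V_eq_sum_payoff, Finset.mul_sum, ← Finset.sum_add_distrib]
  refine Finset.sum_congr rfl fun ω _ => ?_
  rw [mul_left_comm, two_mul_payoff_sign_add (hr₁ ω) (hr₂ ω)]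
  split_ifs <;> ring

end

theorem stmt_16_general {Ω : Type*} [Fintype Ω] (p : Ω → ℝ)
    (h₁ h₂ : Ω → ℤ)
    (hr₁ : ∀ ω, h₁ ω = -1 ∨ h₁ ω = 0 ∨ h₁ ω = 1)
    (hr₂ : ∀ ω, h₂ ω = -1 ∨ h₂ ω = 0 ∨ h₂ ω = 1)
    (hpos₁ : 0 < Pr p (fun ω => h₁ ω = 0))
    (hpos₂ : 0 < Pr p (fun ω => h₂ ω = 0))
    (hc₁ : Pr p (fun ω => h₁ ω = 0 ∧ h₂ ω = 1) / Pr p (fun ω => h₁ ω = 0) ≥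
      Pr p (fun ω => h₁ ω = 0 ∧ h₂ ω = -1) / Pr p (fun ω => h₁ ω = 0))
    (hc₂ : Pr p (fun ω => h₂ ω = 0 ∧ h₁ ω = 1) / Pr p (fun ω => h₂ ω = 0) ≥
      Pr p (fun ω => h₂ ω = 0 ∧ h₁ ω = -1) / Pr p (fun ω => h₂ ω = 0)) :
    V p (fun ω => (h₁ ω + h₂ ω).sign) ≥ (V p h₁ + V p h₂) / 2 := by
  have hadv₁ := (div_le_div_iff_of_pos_right hpos₁).1 hc₁
  have hadv₂ := (div_le_div_iff_of_pos_right hpos₂).1 hc₂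
  linarith [two_mul_V_sign_add p h₁ h₂ hr₁ hr₂]

theorem stmt_16 {Ω : Type*} [Fintype Ω] (p : Ω → ℝ)
    (hp : ∀ ω, 0 ≤ p ω) (hsum : ∑ ω, p ω = 1)
    (h₁ h₂ : Ω → ℤ)
    (hr₁ : ∀ ω, h₁ ω = -1 ∨ h₁ ω = 0 ∨ h₁ ω = 1)
    (hr₂ : ∀ ω, h₂ ω = -1 ∨ h₂ ω = 0 ∨ h₂ ω = 1)
    (hpos₁ : 0 < Pr p (fun ω => h₁ ω = 0))
    (hpos₂ : 0 < Pr p (fun ω => h₂ ω = 0))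
    (hc₁ : Pr p (fun ω => h₁ ω = 0 ∧ h₂ ω = 1) / Pr p (fun ω => h₁ ω = 0) ≥
      Pr p (fun ω => h₁ ω = 0 ∧ h₂ ω = -1) / Pr p (fun ω => h₁ ω = 0))
    (hc₂ : Pr p (fun ω => h₂ ω = 0 ∧ h₁ ω = 1) / Pr p (fun ω => h₂ ω = 0) ≥
      Pr p (fun ω => h₂ ω = 0 ∧ h₁ ω = -1) / Pr p (fun ω => h₂ ω = 0)) :
    V p (fun ω => (h₁ ω + h₂ ω).sign) ≥ (V p h₁ + V p h₂) / 2 :=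
  stmt_16_general p h₁ h₂ hr₁ hr₂ hpos₁ hpos₂ hc₁ hc₂
end
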